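/- arXiv:2002.03108 — 5 statements merged into one kernel-verified Lean document; each statement's English description precedes it below -/
import Mathlib

section
/- Let G be a cactus graph with k ≥ 2 cycles and let S be a general position set of G of maximum cardinality (a gp-set). Then for every cycle C₀ of G, the number of vertices of C₀ that belong to S is strictly less than 3. -/
open SimpleGraph

/-- A set of vertices is in *general position* if no three distinct vertices of it
lie on a common geodesic. -/
def IsGPSet {V : Type*} (G : SimpleGraph V) (S : Set V) : Prop :=
  ∀ x ∈ S, ∀ y ∈ S, ∀ z ∈ S, x ≠ y → y ≠ z → x ≠ z →
    G.dist x z ≠ G.dist x y + G.dist y z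

/-- The general position number `gp(G)`: the largest cardinality of a general
position set. -/
noncomputable def gpNumber {V : Type*} (G : SimpleGraph V) : ℕ :=
  sSup {n | ∃ S : Set V, IsGPSet G S ∧ S.ncard = n}

/-- A gp-set: a general position set of maximum cardinality. -/
def IsGPMaxSet {V : Type*} (G : SimpleGraph V) (S : Set V) : Prop :=
  IsGPSet G S ∧ S.ncard = gpNumber G

/-- The degree of a vertex, as the cardinality of its neighbourhood. -/
noncomputable def vdeg {V : Type*} (G : SimpleGraph V) (v : V) : ℕ :=
  (G.neighborSet v).ncard

/-- A subgraph of `G` which is a cycle: nonempty, finite, connected and 2-regular. -/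
def IsCycleSubgraph {V : Type*} (G : SimpleGraph V) (C : G.Subgraph) : Prop :=
  C.verts.Nonempty ∧ C.verts.Finite ∧ C.coe.Connected ∧
    ∀ v ∈ C.verts, (C.neighborSet v).ncard = 2

/-- A cactus: a connected graph in which any two distinct cycles are edge-disjoint
(equivalently, each block is a cycle or a cut edge). -/
def IsCactus {V : Type*} (G : SimpleGraph V) : Prop :=
  G.Connected ∧ ∀ C₁ C₂ : G.Subgraph, IsCycleSubgraph G C₁ → IsCycleSubgraph G C₂ →
    C₁ ≠ C₂ → Disjoint C₁.edgeSet C₂.edgeSet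

/-- The number of cycles of `G`. -/
noncomputable def numCycles {V : Type*} (G : SimpleGraph V) : ℕ :=
  {C : G.Subgraph | IsCycleSubgraph G C}.ncard

/-- The number of pendant edges of `G` (edges incident with a vertex of degree 1). -/
noncomputable def numPendantEdges {V : Type*} (G : SimpleGraph V) : ℕ :=
  {e ∈ G.edgeSet | ∃ v ∈ e, vdeg G v = 1}.ncard

/-- `v` is a cut vertex of `G`: `G` is connected but deleting `v` disconnects it. -/
def IsCutVtx {V : Type*} (G : SimpleGraph V) (v : V) : Prop :=
  G.Connected ∧ ¬ (G.induce ({v}ᶜ : Set V)).Connected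

/-- `p` is a cut-path on the cycle `C`: a path running along `C` that contains
all cut vertices of `G` lying on `C`. -/
def IsCutPathOn {V : Type*} (G : SimpleGraph V) (C : G.Subgraph)
    {u v : V} (p : G.Walk u v) : Prop :=
  p.IsPath ∧ (∀ e ∈ p.edges, e ∈ C.edgeSet) ∧
    ∀ w ∈ C.verts, IsCutVtx G w → w ∈ p.support

/-- `D_c` of a cycle `C`: the minimum number of edges of a cut-path between two
distinct cut vertices of `C`. -/
noncomputable def Dc {V : Type*} (G : SimpleGraph V) (C : G.Subgraph) : ℕ :=
  sInf {n | ∃ (u v : V) (p : G.Walk u v), u ≠ v ∧ u ∈ C.verts ∧ v ∈ C.verts ∧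
    IsCutVtx G u ∧ IsCutVtx G v ∧ IsCutPathOn G C p ∧ p.length = n}

/-- A good cycle: an end-block (at most one cut vertex), or a cycle whose `D_c`
is at most `ℓ/2` for even length `ℓ`, resp. at most `⌊ℓ/2⌋ - 1` for odd `ℓ`. -/
def IsGoodCycle {V : Type*} (G : SimpleGraph V) (C : G.Subgraph) : Prop :=
  IsCycleSubgraph G C ∧
    ({v ∈ C.verts | IsCutVtx G v}.ncard ≤ 1 ∨
     (Even C.verts.ncard ∧ Dc G C ≤ C.verts.ncard / 2) ∨
     (Odd C.verts.ncard ∧ Dc G C ≤ C.verts.ncard / 2 - 1))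

/-- A block of a cactus: a cycle or a bridge (cut edge). -/
def IsCactusBlock {V : Type*} (G : SimpleGraph V) (H : G.Subgraph) : Prop :=
  IsCycleSubgraph G H ∨
    ∃ (u v : V) (h : G.Adj u v), G.IsBridge s(u, v) ∧ H = G.subgraphOfAdj h

/-- A chain cactus: a cactus in which every block has at most two cut vertices
and every cut vertex lies in exactly two blocks. -/
def IsChainCactus {V : Type*} (G : SimpleGraph V) : Prop :=
  IsCactus G ∧
    (∀ H : G.Subgraph, IsCactusBlock G H → {v ∈ H.verts | IsCutVtx G v}.ncard ≤ 2) ∧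
    (∀ v : V, IsCutVtx G v →
      {H : G.Subgraph | IsCactusBlock G H ∧ v ∈ H.verts}.ncard = 2)

/-- An end-block: a cycle containing exactly one cut vertex of `G`. -/
def IsEndBlock {V : Type*} (G : SimpleGraph V) (C : G.Subgraph) : Prop :=
  IsCycleSubgraph G C ∧ {v ∈ C.verts | IsCutVtx G v}.ncard = 1

/-- The set of vertices lying on some cycle of `G`. -/
def cycleVerts {V : Type*} (G : SimpleGraph V) : Set V :=
  {v | ∃ C : G.Subgraph, IsCycleSubgraph G C ∧ v ∈ C.verts}

/-- The vertices of pendant trees of a cactus, roots removed: vertices lying on no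
cycle and on no path between two cycle vertices (other than as an endpoint). -/
def pendantTreeInterior {V : Type*} (G : SimpleGraph V) : Set V :=
  {v | v ∉ cycleVerts G ∧
    ¬ ∃ (x y : V) (p : G.Walk x y), p.IsPath ∧ x ∈ cycleVerts G ∧
      y ∈ cycleVerts G ∧ v ∈ p.support ∧ v ≠ x ∧ v ≠ y}

/-!
In a cactus, a walk between two distinct vertices of a cycle `C` avoiding the edges of `C` would
close up, with an arc of `C`, into a second cycle sharing an edge with `C`. Hence every vertex `x`
has a gate `c ∈ C` through which all geodesics from `x` to `C` pass, and geodesics between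
vertices of `C` run along `C`. Of three vertices of `C`, two have geodesics from the gate leaving
along the same edge of `C`, so one of them, `p`, lies on a geodesic from `x` to the other: a
general position set meeting `C` in three vertices has no further vertex. On the other hand, given
a second cycle `D`, the two `C`-neighbours of the gate of `D` on `C` and the two `D`-neighbours of
the gate of `C` on `D` form a general position set of size four.
-/

-- `IsCactus G` unfolds to `G.Connected ∧ CyclesEdgeDisjoint G`.
def CyclesEdgeDisjoint {V : Type*} (G : SimpleGraph V) : Prop :=
  ∀ C₁ C₂ : G.Subgraph, IsCycleSubgraph G C₁ → IsCycleSubgraph G C₂ →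
    C₁ ≠ C₂ → Disjoint C₁.edgeSet C₂.edgeSet

section

variable {V : Type*} {G : SimpleGraph V}

theorem Set.eq_of_ncard_eq_two {α : Type*} {s : Set α} (hs : s.ncard = 2) {a b c : α}
    (ha : a ∈ s) (hb : b ∈ s) (hc : c ∈ s) (hba : b ≠ a) (hca : c ≠ a) : b = c := by
  obtain ⟨x, y, -, rfl⟩ := Set.ncard_eq_two.mp hs
  simp only [Set.mem_insert_iff, Set.mem_singleton_iff] at ha hb hc
  grind

theorem SimpleGraph.reachable_deleteEdges_iff_exists_isPath {s : Set (Sym2 V)} {u v : V} :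
    (G.deleteEdges s).Reachable u v ↔
      ∃ P : G.Walk u v, P.IsPath ∧ ∀ e ∈ P.edges, e ∉ s := by
  classical
  constructor
  · rintro ⟨W⟩
    refine ⟨W.bypass.mapLe (G.deleteEdges_le s), (Walk.isPath_mapLe _).mpr W.bypass_isPath,
      fun e he => ?_⟩
    rw [Walk.edges_mapLe_eq_edges] at he
    have := W.bypass.edges_subset_edgeSet he
    rw [edgeSet_deleteEdges] at this
    exact this.2
  · rintro ⟨P, -, hP⟩
    exact ⟨P.toDeleteEdges s hP⟩

theorem SimpleGraph.Walk.dist_eq_add_of_mem_support {u v w : V} (P : G.Walk u v)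
    (hP : P.length = G.dist u v) (hw : w ∈ P.support) :
    G.dist u v = G.dist u w + G.dist w v := by
  classical
  have htake := G.dist_le (P.takeUntil w hw)
  have hdrop := G.dist_le (P.dropUntil w hw)
  have hsplit := congrArg Walk.length (P.take_spec hw)
  rw [Walk.length_append] at hsplit
  have := (P.dropUntil w hw).reachable.dist_triangle_right u
  omega

theorem SimpleGraph.Subgraph.Connected.exists_isPath {H : G.Subgraph} (hH : H.Connected)
    {a b : V} (ha : a ∈ H.verts) (hb : b ∈ H.verts) :
    ∃ P : G.Walk a b, P.IsPath ∧ ∀ e ∈ P.edges, e ∈ H.edgeSet := by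
  classical
  obtain ⟨W, hW⟩ := (Subgraph.preconnected_iff_forall_exists_walk_subgraph H).mp
    hH.preconnected ha hb
  refine ⟨W.bypass, W.bypass_isPath, fun e he => ?_⟩
  exact Subgraph.edgeSet_mono hW (W.mem_edges_toSubgraph.mpr (W.edges_bypass_subset_edges he))

theorem SimpleGraph.Walk.IsCycle.isCycleSubgraph_toSubgraph {a : V} {R : G.Walk a a}
    (hR : R.IsCycle) : IsCycleSubgraph G R.toSubgraph :=
  ⟨⟨a, R.start_mem_verts_toSubgraph⟩, R.verts_toSubgraph ▸ R.support.finite_toSet,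
    R.toSubgraph_connected.coe,
    fun _ hv => hR.ncard_neighborSet_toSubgraph_eq_two (R.mem_verts_toSubgraph.mp hv)⟩

theorem SimpleGraph.Walk.not_nil_of_isCycle_append_reverse {u v : V} {p q : G.Walk u v}
    (h : (p.append q.reverse).IsCycle) (hq : q.IsPath) : ¬ p.Nil := by
  intro hp
  obtain rfl := hp.eq
  rw [Walk.eq_nil_iff_nil.mpr hp, Walk.eq_nil_iff_nil.mpr (Walk.isPath_iff_nil.mp hq)] at h
  exact h.not_nil Walk.Nil.nil

theorem IsCycleSubgraph.eq_of_reachable_deleteEdges (hG : CyclesEdgeDisjoint G) {C : G.Subgraph}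
    (hC : IsCycleSubgraph G C) {a b : V} (ha : a ∈ C.verts) (hb : b ∈ C.verts)
    (hab : (G.deleteEdges C.edgeSet).Reachable a b) : a = b := by
  by_contra hne
  obtain ⟨P, hP, hPC⟩ := reachable_deleteEdges_iff_exists_isPath.mp hab
  obtain ⟨A, hA, hAC⟩ := (Subgraph.connected_iff'.mpr hC.2.2.1).exists_isPath ha hb
  have hPA : P ≠ A := by
    rintro rfl
    exact hPC _ (P.mk_start_snd_mem_edges (Walk.not_nil_of_ne hne))
      (hAC _ (P.mk_start_snd_mem_edges (Walk.not_nil_of_ne hne)))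
  obtain ⟨u, v, p, q, hpP, hqA, hcyc⟩ := hP.exists_isCycle_of_ne hA hPA
  have hp := Walk.isPath_of_isSubwalk hpP hP
  have hq := Walk.isPath_of_isSubwalk hqA hA
  have hp_nil : ¬ p.Nil := Walk.not_nil_of_isCycle_append_reverse hcyc hq
  have hq_nil : ¬ q.Nil := by
    refine Walk.not_nil_of_isCycle_append_reverse (p := q) (q := p) ?_ hp
    simpa [Walk.reverse_append] using hcyc.reverse
  -- The cycle `D` has an edge of `P`, which is not in `C`, and an edge of `A`, which is.
  set D := (p.append q.reverse).toSubgraph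
  have hpD : s(u, p.snd) ∈ D.edgeSet := by
    rw [Walk.mem_edges_toSubgraph, Walk.edges_append]
    exact List.mem_append_left _ (p.mk_start_snd_mem_edges hp_nil)
  have hqD : s(u, q.snd) ∈ D.edgeSet := by
    rw [Walk.mem_edges_toSubgraph, Walk.edges_append, Walk.edges_reverse]
    exact List.mem_append_right _ (List.mem_reverse.mpr (q.mk_start_snd_mem_edges hq_nil))
  have hDC : D ≠ C := fun h =>
    hPC _ (hpP.edges_subset (p.mk_start_snd_mem_edges hp_nil)) (h ▸ hpD)
  exact Set.disjoint_left.mp (hG D C hcyc.isCycleSubgraph_toSubgraph hC hDC) hqD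
    (hAC _ (hqA.edges_subset (q.mk_start_snd_mem_edges hq_nil)))

theorem SimpleGraph.Walk.exists_append_eq_of_end_mem_verts (C : G.Subgraph) {x b : V}
    (P : G.Walk x b) (hb : b ∈ C.verts) :
    ∃ d ∈ C.verts, ∃ (P₁ : G.Walk x d) (P₂ : G.Walk d b),
      P₁.append P₂ = P ∧ ∀ e ∈ P₁.edges, e ∉ C.edgeSet := by
  induction P with
  | nil => exact ⟨_, hb, Walk.nil, Walk.nil, rfl, by simp⟩
  | @cons u y b h p ih =>
    by_cases hu : u ∈ C.verts
    · exact ⟨u, hu, Walk.nil, Walk.cons h p, rfl, by simp⟩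
    obtain ⟨d, hd, P₁, P₂, rfl, hP₁⟩ := ih hb
    refine ⟨d, hd, Walk.cons h P₁, P₂, rfl, ?_⟩
    rintro e he
    rw [Walk.edges_cons, List.mem_cons] at he
    rcases he with rfl | he
    · exact fun huy => hu (C.edge_vert (Subgraph.mem_edgeSet.mp huy))
    · exact hP₁ e he

theorem SimpleGraph.Connected.exists_reachable_deleteEdges (hconn : G.Connected)
    {C : G.Subgraph} (hC : C.verts.Nonempty) (x : V) :
    ∃ c ∈ C.verts, (G.deleteEdges C.edgeSet).Reachable x c := by
  obtain ⟨b, hb⟩ := hC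
  obtain ⟨c, hc, P₁, -, -, hP₁⟩ :=
    (hconn.preconnected x b).some.exists_append_eq_of_end_mem_verts C hb
  exact ⟨c, hc, ⟨P₁.toDeleteEdges _ hP₁⟩⟩

theorem IsCycleSubgraph.dist_eq_add_of_reachable_deleteEdges (hconn : G.Connected)
    (hG : CyclesEdgeDisjoint G) {C : G.Subgraph} (hC : IsCycleSubgraph G C) {x c u : V}
    (hxc : (G.deleteEdges C.edgeSet).Reachable x c) (hc : c ∈ C.verts) (hu : u ∈ C.verts) :
    G.dist x u = G.dist x c + G.dist c u := by
  obtain ⟨P, -, hP⟩ := hconn.exists_path_of_dist x u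
  obtain ⟨d, hd, P₁, P₂, rfl, hP₁⟩ := P.exists_append_eq_of_end_mem_verts C hu
  obtain rfl : d = c :=
    hC.eq_of_reachable_deleteEdges hG hd hc ((P₁.toDeleteEdges _ hP₁).reachable.symm.trans hxc)
  rw [Walk.length_append] at hP
  have := G.dist_le P₁
  have := G.dist_le P₂
  have := hconn.dist_triangle (u := x) (v := d) (w := u)
  omega

theorem IsCycleSubgraph.edges_mem_of_isPath (hG : CyclesEdgeDisjoint G) {C : G.Subgraph}
    (hC : IsCycleSubgraph G C) {a b : V} (P : G.Walk a b) (hP : P.IsPath) (ha : a ∈ C.verts)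
    (hb : b ∈ C.verts) : ∀ e ∈ P.edges, e ∈ C.edgeSet := by
  induction P with
  | nil => simp
  | @cons u y b h p ih =>
    obtain ⟨hp, hup⟩ := (Walk.cons_isPath_iff h p).mp hP
    have hy : y ∈ C.verts := by
      by_contra hy
      obtain ⟨d, hd, P₁, P₂, rfl, hP₁⟩ := p.exists_append_eq_of_end_mem_verts C hb
      have hud : u ≠ d := fun hud => hup (hud ▸ (P₁.mem_support_append_iff P₂).mpr
        (Or.inl P₁.end_mem_support))
      refine hud (hC.eq_of_reachable_deleteEdges hG ha hd
        ⟨(Walk.cons h P₁).toDeleteEdges _ ?_⟩)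
      rintro e he
      rw [Walk.edges_cons, List.mem_cons] at he
      rcases he with rfl | he
      · exact fun huy => hy (C.edge_vert (Subgraph.mem_edgeSet.mp huy).symm)
      · exact hP₁ e he
    have huy : s(u, y) ∈ C.edgeSet := by
      by_contra huy
      exact h.ne (hC.eq_of_reachable_deleteEdges hG ha hy
        (G.deleteEdges_adj.mpr ⟨h, huy⟩).reachable)
    rintro e he
    rw [Walk.edges_cons, List.mem_cons] at he
    rcases he with rfl | he
    · exact huy
    · exact ih hp hy hb e he

theorem IsCycleSubgraph.support_subset_of_length_le {C : G.Subgraph} (hC : IsCycleSubgraph G C)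
    {x y a b : V} (P : G.Walk x a) (Q : G.Walk x b) (hyx : C.Adj y x)
    (hP : P.IsPath) (hQ : Q.IsPath) (hPC : ∀ e ∈ P.edges, e ∈ C.edgeSet)
    (hQC : ∀ e ∈ Q.edges, e ∈ C.edgeSet) (hyP : y ∉ P.support) (hyQ : y ∉ Q.support)
    (hlen : P.length ≤ Q.length) : P.support ⊆ Q.support := by
  induction P generalizing y with
  | nil => simp
  | @cons x w a hxw p ih =>
    cases Q with
    | nil => simp at hlen
    | @cons _ w' _ hxw' q =>
      have hCw : C.Adj x w := Subgraph.mem_edgeSet.mp (hPC _ (by simp))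
      have hCw' : C.Adj x w' := Subgraph.mem_edgeSet.mp (hQC _ (by simp))
      obtain rfl : w = w' := Set.eq_of_ncard_eq_two (hC.2.2.2 x (C.edge_vert hCw)) hyx.symm
        hCw hCw' (by rintro rfl; simp at hyP) (by rintro rfl; simp at hyQ)
      obtain ⟨hp, hxp⟩ := (Walk.cons_isPath_iff hxw p).mp hP
      obtain ⟨hq, hxq⟩ := (Walk.cons_isPath_iff hxw' q).mp hQ
      have := ih q hCw hp hq (fun e he => hPC e (by simp [he]))
        (fun e he => hQC e (by simp [he])) hxp hxq (by simpa using hlen)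
      simpa using List.cons_subset_cons x this

theorem IsCycleSubgraph.dist_eq_add_of_snd_eq {C : G.Subgraph} (hC : IsCycleSubgraph G C)
    {c s t : V} (Ps : G.Walk c s) (Pt : G.Walk c t) (hPs : Ps.IsPath) (hPt : Pt.IsPath)
    (hPsC : ∀ e ∈ Ps.edges, e ∈ C.edgeSet) (hPtC : ∀ e ∈ Pt.edges, e ∈ C.edgeSet)
    (hcs : c ≠ s) (hct : c ≠ t) (hsnd : Ps.snd = Pt.snd) (hPt_dist : Pt.length = G.dist c t)
    (hlen : Ps.length ≤ Pt.length) : G.dist c t = G.dist c s + G.dist s t := by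
  obtain ⟨w, hcw, ps, rfl⟩ := Walk.not_nil_iff.mp (Walk.not_nil_of_ne (p := Ps) hcs)
  obtain ⟨w', hcw', pt, rfl⟩ := Walk.not_nil_iff.mp (Walk.not_nil_of_ne (p := Pt) hct)
  obtain rfl : w = w' := by simpa using hsnd
  obtain ⟨hps, hcps⟩ := (Walk.cons_isPath_iff hcw ps).mp hPs
  obtain ⟨hpt, hcpt⟩ := (Walk.cons_isPath_iff hcw' pt).mp hPt
  have hsub := hC.support_subset_of_length_le ps pt (Subgraph.mem_edgeSet.mp (hPsC _ (by simp)))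
    hps hpt (fun e he => hPsC e (by simp [he])) (fun e he => hPtC e (by simp [he]))
    hcps hcpt (by simpa using hlen)
  exact (Walk.cons hcw' pt).dist_eq_add_of_mem_support hPt_dist
    (List.mem_cons_of_mem _ (hsub ps.end_mem_support))

theorem IsCycleSubgraph.exists_dist_eq_add_of_mem_verts (hconn : G.Connected)
    (hG : CyclesEdgeDisjoint G) {C : G.Subgraph} (hC : IsCycleSubgraph G C) {c : V}
    (hc : c ∈ C.verts) {T : Set V} (hT : T ⊆ C.verts) (hT3 : 2 < T.ncard) :
    ∃ p ∈ T, ∃ q ∈ T, p ≠ q ∧ G.dist c q = G.dist c p + G.dist p q := by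
  by_cases hcT : c ∈ T
  · obtain ⟨q, hq, hqc⟩ := Set.exists_ne_of_one_lt_ncard (s := T) (by omega) c
    exact ⟨c, hcT, q, hq, hqc.symm, by simp⟩
  choose P hP hPdist using hconn.exists_path_of_dist c
  have hPC : ∀ v ∈ T, ∀ e ∈ (P v).edges, e ∈ C.edgeSet := fun v hv =>
    hC.edges_mem_of_isPath hG (P v) (hP v) hc (hT hv)
  have hsnd : ∀ v ∈ T, (P v).snd ∈ C.neighborSet c := fun v hv =>
    Subgraph.mem_edgeSet.mp (hPC v hv _ ((P v).mk_start_snd_mem_edges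
      (Walk.not_nil_of_ne fun h => hcT (h ▸ hv))))
  have hdeg := hC.2.2.2 c hc
  have hnotinj : ¬ Set.InjOn (fun v => (P v).snd) T := fun hinj => by
    have := Set.ncard_le_ncard_of_injOn _ hsnd hinj (Set.finite_of_ncard_ne_zero (by omega))
    omega
  obtain ⟨s, hs, t, ht, hsnd_eq, hst⟩ :
      ∃ s ∈ T, ∃ t ∈ T, (P s).snd = (P t).snd ∧ s ≠ t := by
    simpa [Set.InjOn] using hnotinj
  have hcs : c ≠ s := fun h => hcT (h ▸ hs)
  have hct : c ≠ t := fun h => hcT (h ▸ ht)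
  rcases le_total (P s).length (P t).length with hle | hle
  · exact ⟨s, hs, t, ht, hst, hC.dist_eq_add_of_snd_eq (P s) (P t) (hP s) (hP t) (hPC s hs)
      (hPC t ht) hcs hct hsnd_eq (hPdist t) hle⟩
  · exact ⟨t, ht, s, hs, hst.symm, hC.dist_eq_add_of_snd_eq (P t) (P s) (hP t) (hP s) (hPC t ht)
      (hPC s hs) hct hcs hsnd_eq.symm (hPdist s) hle⟩

theorem IsCycleSubgraph.exists_dist_eq_add (hconn : G.Connected) (hG : CyclesEdgeDisjoint G)
    {C : G.Subgraph} (hC : IsCycleSubgraph G C) {T : Set V} (hT : T ⊆ C.verts)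
    (hT3 : 2 < T.ncard) (x : V) :
    ∃ p ∈ T, ∃ q ∈ T, p ≠ q ∧ G.dist x q = G.dist x p + G.dist p q := by
  obtain ⟨c, hc, hxc⟩ := hconn.exists_reachable_deleteEdges hC.1 x
  obtain ⟨p, hp, q, hq, hpq, hcpq⟩ := hC.exists_dist_eq_add_of_mem_verts hconn hG hc hT hT3
  have hxp := hC.dist_eq_add_of_reachable_deleteEdges hconn hG hxc hc (hT hp)
  have hxq := hC.dist_eq_add_of_reachable_deleteEdges hconn hG hxc hc (hT hq)
  exact ⟨p, hp, q, hq, hpq, by omega⟩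

theorem IsGPSet.ncard_le_three (hconn : G.Connected) (hG : CyclesEdgeDisjoint G)
    {C : G.Subgraph} (hC : IsCycleSubgraph G C) {S : Set V} (hS : IsGPSet G S)
    (hCS : 2 < (C.verts ∩ S).ncard) : S.ncard ≤ 3 := by
  obtain ⟨T, hTCS, hT3⟩ := Set.exists_subset_card_eq (show 3 ≤ (C.verts ∩ S).ncard by omega)
  have hST : S ⊆ T := by
    intro x hx
    by_contra hxT
    obtain ⟨p, hp, q, hq, hpq, hxpq⟩ :=
      hC.exists_dist_eq_add hconn hG (fun v hv => (hTCS hv).1) (by omega) x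
    exact hS x hx p (hTCS hp).2 q (hTCS hq).2 (fun h => hxT (h ▸ hp)) hpq
      (fun h => hxT (h ▸ hq)) hxpq
  exact hT3 ▸ Set.ncard_le_ncard hST (Set.finite_of_ncard_ne_zero (by omega))

theorem SimpleGraph.Connected.exists_reachable_deleteEdges_of_disjoint (hconn : G.Connected)
    {C H : G.Subgraph} (hC : C.verts.Nonempty) (hH : H.Connected)
    (hHC : Disjoint H.edgeSet C.edgeSet) :
    ∃ c ∈ C.verts, ∀ t ∈ H.verts, (G.deleteEdges C.edgeSet).Reachable t c := by
  obtain ⟨w, hw⟩ := hH.nonempty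
  obtain ⟨c, hc, hwc⟩ := hconn.exists_reachable_deleteEdges hC w
  refine ⟨c, hc, fun t ht => ?_⟩
  obtain ⟨P, -, hP⟩ := hH.exists_isPath ht hw
  exact Reachable.trans ⟨P.toDeleteEdges _ fun e he => Set.disjoint_left.mp hHC (hP e he)⟩ hwc

theorem IsCycleSubgraph.exists_pair_equidistant (hconn : G.Connected)
    (hG : CyclesEdgeDisjoint G) {C D : G.Subgraph} (hC : IsCycleSubgraph G C)
    (hD : IsCycleSubgraph G D) (hCD : C ≠ D) :
    ∃ u u' : V, u ≠ u' ∧ u ∈ C.verts \ D.verts ∧ u' ∈ C.verts \ D.verts ∧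
      G.dist u u' ≤ 2 ∧
      ∀ t ∈ D.verts \ C.verts, G.dist t u = G.dist t u' ∧ 2 ≤ G.dist t u := by
  obtain ⟨c, hc, hDc⟩ := hconn.exists_reachable_deleteEdges_of_disjoint hC.1
    (Subgraph.connected_iff'.mpr hD.2.2.1) (hG D C hD hC hCD.symm)
  have hnbr : ∀ v ∈ C.neighborSet c, v ∈ C.verts \ D.verts ∧ G.dist c v = 1 := by
    intro v (hcv : C.Adj c v)
    have hv := C.edge_vert hcv.symm
    refine ⟨⟨hv, fun hvD => (C.adj_sub hcv).ne ?_⟩, dist_eq_one_iff_adj.mpr (C.adj_sub hcv)⟩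
    exact (hC.eq_of_reachable_deleteEdges hG hv hc (hDc v hvD)).symm
  obtain ⟨u, u', huu', hN⟩ := Set.ncard_eq_two.mp (hC.2.2.2 c hc)
  obtain ⟨hu, hcu⟩ := hnbr u (by simp [hN])
  obtain ⟨hu', hcu'⟩ := hnbr u' (by simp [hN])
  refine ⟨u, u', huu', hu, hu', ?_, fun t ht => ?_⟩
  · have := hconn.dist_triangle (u := u) (v := c) (w := u')
    have := G.dist_comm (u := u) (v := c)
    omega
  · have htu := hC.dist_eq_add_of_reachable_deleteEdges hconn hG (hDc t ht.1) hc hu.1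
    have htu' := hC.dist_eq_add_of_reachable_deleteEdges hconn hG (hDc t ht.1) hc hu'.1
    have := hconn.pos_dist_of_ne fun htc : t = c => ht.2 (htc ▸ hc)
    omega

theorem isGPSet_of_two_close_pairs (hconn : G.Connected) {u u' w w' : V} (hu : u ≠ u')
    (hw : w ≠ w') (huu' : G.dist u u' ≤ 2) (hww' : G.dist w w' ≤ 2)
    (hwu : ∀ t ∈ ({w, w'} : Set V), G.dist t u = G.dist t u' ∧ 2 ≤ G.dist t u)
    (huw : ∀ t ∈ ({u, u'} : Set V), G.dist t w = G.dist t w' ∧ 2 ≤ G.dist t w) :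
    IsGPSet G {u, u', w, w'} := by
  have := hwu w (by simp)
  have := hwu w' (by simp)
  have := huw u (by simp)
  have := huw u' (by simp)
  have := hconn.pos_dist_of_ne hu
  have := hconn.pos_dist_of_ne hw
  have := G.dist_comm (u := u) (v := u')
  have := G.dist_comm (u := w) (v := w')
  have := G.dist_comm (u := u) (v := w)
  have := G.dist_comm (u := u) (v := w')
  have := G.dist_comm (u := u') (v := w)
  have := G.dist_comm (u := u') (v := w')
  intro x hx y hy z hz hxy hyz hxz
  simp only [Set.mem_insert_iff, Set.mem_singleton_iff] at hx hy hz
  rcases hx with rfl | rfl | rfl | rfl <;> rcases hy with rfl | rfl | rfl | rfl <;>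
    rcases hz with rfl | rfl | rfl | rfl <;> first | contradiction | omega

theorem le_gpNumber [Finite V] {T : Set V} (hT : IsGPSet G T) : T.ncard ≤ gpNumber G :=
  le_csSup ⟨Nat.card V, by rintro n ⟨S, -, rfl⟩; exact Set.ncard_le_card S⟩ ⟨T, hT, rfl⟩

theorem four_le_gpNumber [Finite V] (hconn : G.Connected) (hG : CyclesEdgeDisjoint G)
    {C D : G.Subgraph} (hC : IsCycleSubgraph G C) (hD : IsCycleSubgraph G D) (hCD : C ≠ D) :
    4 ≤ gpNumber G := by
  obtain ⟨u, u', huu', hu, hu', hdu, hDu⟩ := hC.exists_pair_equidistant hconn hG hD hCD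
  obtain ⟨w, w', hww', hw, hw', hdw, hCw⟩ := hD.exists_pair_equidistant hconn hG hC hCD.symm
  have hgp := isGPSet_of_two_close_pairs hconn huu' hww' hdu hdw
    (by rintro t (rfl | rfl); exacts [hDu _ hw, hDu _ hw'])
    (by rintro t (rfl | rfl); exacts [hCw _ hu, hCw _ hu'])
  have hCD_ne : ∀ a ∈ C.verts \ D.verts, ∀ b ∈ D.verts \ C.verts, a ≠ b :=
    fun a ha b hb hab => ha.2 (hab ▸ hb.1)
  have hcard : ({u, u', w, w'} : Set V).ncard = 4 := by
    rw [Set.ncard_insert_of_notMem, Set.ncard_insert_of_notMem, Set.ncard_pair hww'] <;>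
      simp [huu', hCD_ne _ hu _ hw, hCD_ne _ hu _ hw', hCD_ne _ hu' _ hw, hCD_ne _ hu' _ hw']
  exact hcard ▸ le_gpNumber hgp

end

/-- In a cactus with `k ≥ 2` cycles, every gp-set meets every cycle
in fewer than 3 vertices. -/
theorem cycle_meets_gpSet_lt_three {V : Type*} [Fintype V] (G : SimpleGraph V) (k : ℕ)
    (hG : IsCactus G) (hk : 2 ≤ k) (hnum : numCycles G = k)
    (S : Set V) (hS : IsGPMaxSet G S)
    (C₀ : G.Subgraph) (hC₀ : IsCycleSubgraph G C₀) :
    (C₀.verts ∩ S).ncard < 3 := by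
  obtain ⟨hconn, hdisj⟩ := hG
  obtain ⟨C₁, hC₁, hne⟩ := Set.exists_ne_of_one_lt_ncard (s := {C | IsCycleSubgraph G C})
    (by rw [← numCycles, hnum]; omega) C₀
  have hge : 4 ≤ S.ncard := hS.2 ▸ four_le_gpNumber hconn hdisj hC₀ hC₁ hne.symm
  by_contra! h3
  have hle : S.ncard ≤ 3 := hS.1.ncard_le_three hconn hdisj hC₀ h3
  omega
end

section
/- Let G be a cactus of order n with k cycles and t pendant edges, where every pendant edge is counted as an edge incident with a vertex of degree 1. Then t ≤ n − 2k − 1. -/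
open SimpleGraph

/-!
A connected finite graph has at least `|E| - |V| + 1` cycles: deleting an edge of a cycle keeps
the graph connected and destroys at least that cycle, and a connected acyclic graph is a tree
with `|V| - 1` edges. In a cactus the `k` cycles are edge-disjoint and each has at least three
edges, none of them pendant, because cycle vertices have degree at least two. Hence
`t + 3k ≤ |E| ≤ n + k - 1`.
-/

namespace SimpleGraph

variable {V : Type*} {G : SimpleGraph V}

theorem Walk.IsCycle.isCycleSubgraph {u : V} {c : G.Walk u u} (hc : c.IsCycle) :
    IsCycleSubgraph G c.toSubgraph :=
  ⟨⟨u, c.start_mem_verts_toSubgraph⟩, by simp [Walk.verts_toSubgraph],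
    c.toSubgraph_connected.coe,
    fun _ hv => hc.ncard_neighborSet_toSubgraph_eq_two (c.mem_verts_toSubgraph.mp hv)⟩

def Subgraph.ofLE {G' : SimpleGraph V} (h : G' ≤ G) (C : G'.Subgraph) : G.Subgraph where
  verts := C.verts
  Adj := C.Adj
  adj_sub hab := h (C.adj_sub hab)
  edge_vert := C.edge_vert
  symm := C.symm

theorem Subgraph.ofLE_injective {G' : SimpleGraph V} (h : G' ≤ G) :
    Function.Injective (Subgraph.ofLE h) := fun C D hCD => by
  rw [Subgraph.ext_iff] at hCD ⊢
  exact hCD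

theorem numCycles_deleteEdges_lt [Finite V] {u : V} {c : G.Walk u u} (hc : c.IsCycle)
    {e : Sym2 V} (he : e ∈ c.edges) : numCycles (G.deleteEdges {e}) < numCycles G := by
  let lift := Subgraph.ofLE (G.deleteEdges_le {e})
  have hsub : lift '' {C | IsCycleSubgraph _ C} ⊂ {C | IsCycleSubgraph G C} := by
    refine Set.ssubset_iff_of_subset ?_ |>.mpr ⟨c.toSubgraph, hc.isCycleSubgraph, ?_⟩
    · rintro _ ⟨C, hC, rfl⟩
      exact hC
    · rintro ⟨C, -, hCc⟩
      have heC : e ∈ C.edgeSet := by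
        rw [← Walk.mem_edges_toSubgraph, ← hCc] at he
        exact he
      simpa using C.edgeSet_subset heC
  rw [numCycles, ← Set.ncard_image_of_injective _ (Subgraph.ofLE_injective (G.deleteEdges_le _))]
  exact Set.ncard_lt_ncard hsub

theorem Connected.ncard_edgeSet_add_one_le [Finite V] (hG : G.Connected) :
    G.edgeSet.ncard + 1 ≤ Nat.card V + numCycles G := by
  induction hm : G.edgeSet.ncard using Nat.strong_induction_on generalizing G with
  | _ m ih =>
  by_cases hac : G.IsAcyclic
  · have htree := (isTree_iff_connected_and_card.mp ⟨hG, hac⟩).2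
    rw [Nat.card_coe_set_eq, hm] at htree
    omega
  obtain ⟨u, c, hc⟩ : ∃ (u : V) (c : G.Walk u u), c.IsCycle := by
    simpa [IsAcyclic] using hac
  have he := c.mk_start_snd_mem_edges hc.not_nil
  have hbridge : ¬ G.IsBridge s(u, c.snd) := fun hb => hb.notMem_edges_of_isCycle hc he
  have hconn := hG.connected_delete_edge_of_not_isBridge hbridge
  have hm' : (G.deleteEdges {s(u, c.snd)}).edgeSet.ncard + 1 = m := by
    rw [edgeSet_deleteEdges, Set.ncard_sdiff_singleton_add_one (c.edges_subset_edgeSet he), hm]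
  have hdel := ih _ (by omega) hconn rfl
  have hfewer := numCycles_deleteEdges_lt hc he
  omega

theorem IsCycleSubgraph.three_le_ncard_edgeSet [Finite V] {C : G.Subgraph}
    (hC : IsCycleSubgraph G C) : 3 ≤ C.edgeSet.ncard := by
  obtain ⟨⟨v, hv⟩, -, -, hdeg⟩ := hC
  have hdeg_two {w : V} (hw : w ∈ C.verts) : 1 < (C.neighborSet w).ncard :=
    hdeg w hw ▸ one_lt_two
  obtain ⟨x, y, hx, hy, hxy⟩ := (Set.one_lt_ncard_iff (Set.toFinite _)).mp (hdeg_two hv)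
  obtain ⟨z, hz, hzv⟩ := Set.exists_ne_of_one_lt_ncard (hdeg_two (C.edge_vert hx.symm)) v
  have hvx : v ≠ x := (C.adj_sub hx).ne
  refine (Set.two_lt_ncard_iff (Set.toFinite _)).mpr
    ⟨s(v, x), s(v, y), s(x, z), hx, hy, hz, ?_, ?_, ?_⟩ <;> simp [*, Ne.symm hvx, Ne.symm hzv]

theorem IsCycleSubgraph.two_le_vdeg [Finite V] {C : G.Subgraph} (hC : IsCycleSubgraph G C)
    {v : V} (hv : v ∈ C.verts) : 2 ≤ vdeg G v :=
  hC.2.2.2 v hv ▸ Set.ncard_le_ncard (C.neighborSet_subset v)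

def cycleEdges (G : SimpleGraph V) : Set (Sym2 V) :=
  ⋃ C ∈ {C : G.Subgraph | IsCycleSubgraph G C}, C.edgeSet

theorem three_mul_numCycles_le_ncard_cycleEdges [Finite V]
    (h : {C : G.Subgraph | IsCycleSubgraph G C}.PairwiseDisjoint Subgraph.edgeSet) :
    3 * numCycles G ≤ (cycleEdges G).ncard := by
  have hfin : {C : G.Subgraph | IsCycleSubgraph G C}.Finite := Set.toFinite _
  rw [cycleEdges, hfin.ncard_biUnion (fun _ _ => Set.toFinite _) h,
    finsum_mem_eq_finite_toFinset_sum _ hfin, numCycles, Set.ncard_eq_toFinset_card _ hfin,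
    mul_comm, ← smul_eq_mul]
  exact Finset.card_nsmul_le_sum _ _ _ fun C hC => (hfin.mem_toFinset.mp hC).three_le_ncard_edgeSet

theorem numPendantEdges_add_ncard_cycleEdges_le [Finite V] :
    numPendantEdges G + (cycleEdges G).ncard ≤ G.edgeSet.ncard := by
  have hdisj : Disjoint {e ∈ G.edgeSet | ∃ v ∈ e, vdeg G v = 1} (cycleEdges G) := by
    rw [Set.disjoint_left]
    rintro e ⟨-, v, hve, hv⟩ he
    obtain ⟨C, hC, heC⟩ := Set.mem_iUnion₂.mp he
    have := hC.two_le_vdeg (C.mem_verts_of_mem_edge heC hve)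
    omega
  rw [numPendantEdges, ← Set.ncard_union_eq hdisj]
  refine Set.ncard_le_ncard (Set.union_subset (Set.sep_subset _ _) ?_)
  exact Set.iUnion₂_subset fun C _ => C.edgeSet_subset

theorem IsCactus.pairwiseDisjoint_edgeSet (hG : IsCactus G) :
    {C : G.Subgraph | IsCycleSubgraph G C}.PairwiseDisjoint Subgraph.edgeSet :=
  fun C₁ h₁ C₂ h₂ hne => hG.2 C₁ C₂ h₁ h₂ hne

end SimpleGraph

/-- A cactus of order `n` with `k` cycles has at most `n - 2k - 1`
pendant edges, i.e. `t + 2k + 1 ≤ n`. -/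
theorem pendant_edges_le {V : Type*} [Fintype V] (G : SimpleGraph V)
    (n k t : ℕ) (hG : IsCactus G) (hn : Fintype.card V = n)
    (hk : numCycles G = k) (ht : numPendantEdges G = t) :
    t + 2 * k + 1 ≤ n := by
  subst hn hk ht
  have hedges := hG.1.ncard_edgeSet_add_one_le
  have hcycles := three_mul_numCycles_le_ncard_cycleEdges hG.pairwiseDisjoint_edgeSet
  have hpendant := numPendantEdges_add_ncard_cycleEdges_le (G := G)
  rw [Nat.card_eq_fintype_card] at hedges
  omega
end

section
/- For the wheel graph W_n (n ≥ 3): gp(W₃) = 4, gp(W₄) = 3, gp(W₅) = 3, and gp(W_n) = ⌊2n/3⌋ for all n ≥ 6. -/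
open SimpleGraph

/-- The wheel graph `W_n`: the cycle on `ZMod n` together with a centre `none`
adjacent to every cycle vertex. -/
def wheelGraph (n : ℕ) : SimpleGraph (Option (ZMod n)) :=
  SimpleGraph.fromRel (fun a b =>
    a = none ∨ ∃ i : ZMod n, a = some i ∧ b = some (i + 1))

/-!
The wheel has diameter two, so three vertices lie on a common geodesic exactly when they induce
a path `x - y - z`. If the centre is in a general position set, every two rim vertices of the set
must be adjacent, which leaves room for at most two of them. Otherwise the set is a subset of the
rim cycle with no three consecutive vertices; as each of the `n` windows of three consecutive
vertices contains at most two of its points and each point lies in three windows, it has at most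
`2n/3` points, and dropping every third vertex (and the last one) attains this bound. For
`n ≥ 6` the rim wins; for `n = 3` the wheel is `K₄`.
-/

section GeneralPosition

variable {V : Type*} {G : SimpleGraph V}

theorem gpNumber_eq_of_isGPSet {S : Set V} {m : ℕ} (hS : IsGPSet G S) (hcard : S.ncard = m)
    (hle : ∀ T, IsGPSet G T → T.ncard ≤ m) : gpNumber G = m :=
  IsGreatest.csSup_eq ⟨⟨S, hS, hcard⟩, by rintro _ ⟨T, hT, rfl⟩; exact hle T hT⟩

theorem SimpleGraph.IsClique.isGPSet {S : Set V} (h : G.IsClique S) : IsGPSet G S := by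
  intro x hx y hy z hz hxy hyz hxz
  rw [dist_eq_one_iff_adj.mpr (h hx hz hxz), dist_eq_one_iff_adj.mpr (h hx hy hxy),
    dist_eq_one_iff_adj.mpr (h hy hz hyz)]
  decide

/-- Distances are `1` or `2`, so `d(x,z) = d(x,y) + d(y,z)` forces `x ~ y ~ z` with `x ≁ z`. -/
theorem isGPSet_iff_of_dist_le_two (hconn : G.Connected) (hdiam : ∀ u v, G.dist u v ≤ 2)
    {S : Set V} :
    IsGPSet G S ↔ ∀ x ∈ S, ∀ y ∈ S, ∀ z ∈ S, x ≠ z → G.Adj x y → G.Adj y z → G.Adj x z := by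
  constructor
  · intro hS x hx y hy z hz hxz hxy hyz
    by_contra hnxz
    have hxz2 : G.dist x z = 2 := by
      have := hconn.pos_dist_of_ne hxz
      have := hdiam x z
      have : G.dist x z ≠ 1 := fun h => hnxz (dist_eq_one_iff_adj.mp h)
      omega
    apply hS x hx y hy z hz hxy.ne hyz.ne hxz
    rw [hxz2, dist_eq_one_iff_adj.mpr hxy, dist_eq_one_iff_adj.mpr hyz]
  · intro h x hx y hy z hz hxy hyz hxz heq
    have := hconn.pos_dist_of_ne hxy
    have := hconn.pos_dist_of_ne hyz
    have := hdiam x z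
    have hadj : G.Adj x z := h x hx y hy z hz hxz (dist_eq_one_iff_adj.mp (by omega))
      (dist_eq_one_iff_adj.mp (by omega))
    rw [dist_eq_one_iff_adj.mpr hadj] at heq
    omega

end GeneralPosition

def NoThreeConsecutive {n : ℕ} (R : Set (ZMod n)) : Prop :=
  ∀ i, ¬ (i ∈ R ∧ i + 1 ∈ R ∧ i + 2 ∈ R)

/-- Each of the `n` windows `{i, i + 1, i + 2}` meets `R` at most twice, and each element of
`R` lies in exactly three windows. -/
theorem NoThreeConsecutive.three_mul_ncard_le {n : ℕ} [NeZero n] {R : Set (ZMod n)}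
    (hR : NoThreeConsecutive R) : 3 * R.ncard ≤ 2 * n := by
  classical
  set f : ZMod n → ℕ := fun i => if i ∈ R then 1 else 0
  have hshift : ∀ k : ZMod n, ∑ i, f (i + k) = R.ncard := by
    intro k
    rw [Fintype.sum_equiv (Equiv.addRight k) (fun i => f (i + k)) f (fun _ => rfl)]
    simp [f, Finset.sum_boole, Set.ncard_eq_toFinset_card']
  have hwindow : ∀ i, f i + f (i + 1) + f (i + 2) ≤ 2 := by
    intro i
    have := hR i
    simp only [f]
    split_ifs <;> simp_all
  calc 3 * R.ncard = ∑ i, (f (i + 0) + f (i + 1) + f (i + 2)) := by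
        rw [Finset.sum_add_distrib, Finset.sum_add_distrib, hshift, hshift, hshift]
        ring
    _ ≤ ∑ _i : ZMod n, 2 := Finset.sum_le_sum fun i _ => by simpa using hwindow i
    _ = 2 * n := by simp [ZMod.card, mul_comm]

lemma card_filter_range_mod_three_ne_two (m : ℕ) :
    ((Finset.range m).filter (fun v => v % 3 ≠ 2)).card = m - m / 3 := by
  induction m with
  | zero => simp
  | succ m ih =>
    rw [Finset.range_add_one, Finset.filter_insert]
    split_ifs with h
    · rw [Finset.card_insert_of_notMem (by simp), ih]
      omega
    · rw [ih]
      omega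

lemma ZMod.natCast_ne_zero_of_pos_of_lt {n k : ℕ} (h0 : 0 < k) (h : k < n) :
    (k : ZMod n) ≠ 0 := by
  rw [Ne, ZMod.natCast_eq_zero_iff]
  exact fun hdvd => absurd (Nat.le_of_dvd h0 hdvd) (by omega)

lemma ZMod.val_add_one_of_add_one_ne {n : ℕ} [NeZero n] {i : ZMod n} (h : i.val + 1 ≠ n) :
    (i + 1).val = i.val + 1 := by
  have := i.val_lt
  rw [ZMod.val_add_of_lt] <;> rw [ZMod.val_one'' (by omega)]
  omega

/-- `n - 1` is dropped as well: it precedes `0` on the cycle. -/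
def rimSkipThirds (n : ℕ) : Set (ZMod n) :=
  {i | i.val % 3 ≠ 2 ∧ i.val + 1 ≠ n}

theorem noThreeConsecutive_rimSkipThirds (n : ℕ) [NeZero n] :
    NoThreeConsecutive (rimSkipThirds n) := by
  rintro i ⟨⟨hi, hin⟩, ⟨hi1, hi1n⟩, hi2, -⟩
  rw [show i + 2 = i + 1 + 1 by ring, ZMod.val_add_one_of_add_one_ne hi1n] at hi2
  rw [ZMod.val_add_one_of_add_one_ne hin] at hi1 hi2
  omega

theorem ncard_rimSkipThirds (n : ℕ) [NeZero n] : (rimSkipThirds n).ncard = 2 * n / 3 := by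
  have hval : ZMod.val '' rimSkipThirds n = (Finset.range (n - 1)).filter (· % 3 ≠ 2) := by
    ext v
    simp only [rimSkipThirds, Set.mem_image, Set.mem_ofPred_eq, Finset.coe_filter,
      Finset.mem_range]
    constructor
    · rintro ⟨i, ⟨hi, hin⟩, rfl⟩
      exact ⟨by have := i.val_lt; omega, hi⟩
    · rintro ⟨hv, hv3⟩
      refine ⟨v, ?_, ZMod.val_cast_of_lt (by omega)⟩
      rw [ZMod.val_cast_of_lt (by omega)]
      exact ⟨hv3, by omega⟩
  rw [← Set.ncard_image_of_injective _ (ZMod.val_injective n), hval, Set.ncard_coe_finset,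
    card_filter_range_mod_three_ne_two]
  have := NeZero.pos n
  omega

section Wheel

variable {n : ℕ}

theorem wheelGraph_adj_none_some (i : ZMod n) : (wheelGraph n).Adj none (some i) := by
  simp [wheelGraph]

theorem wheelGraph_adj_some_some {i j : ZMod n} :
    (wheelGraph n).Adj (some i) (some j) ↔ i ≠ j ∧ (j = i + 1 ∨ i = j + 1) := by
  simp [wheelGraph]

theorem wheelGraph_connected (n : ℕ) : (wheelGraph n).Connected := by
  have h : ∀ v, (wheelGraph n).Reachable none v := by
    rintro (_ | i)
    · rfl
    · exact (wheelGraph_adj_none_some i).reachable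
  exact (connected_iff _).mpr ⟨fun u v => (h u).symm.trans (h v), ⟨none⟩⟩

theorem wheelGraph_dist_le_two (u v : Option (ZMod n)) : (wheelGraph n).dist u v ≤ 2 := by
  have h : ∀ w, (wheelGraph n).dist none w ≤ 1 := by
    rintro (_ | i)
    · simp
    · exact (dist_eq_one_iff_adj.mpr (wheelGraph_adj_none_some i)).le
  calc (wheelGraph n).dist u v ≤ (wheelGraph n).dist u none + (wheelGraph n).dist none v :=
        (wheelGraph_connected n).dist_triangle
    _ ≤ 1 + 1 := add_le_add (dist_comm (G := wheelGraph n) ▸ h u) (h v)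

theorem isGPSet_wheelGraph_iff {S : Set (Option (ZMod n))} :
    IsGPSet (wheelGraph n) S ↔ ∀ x ∈ S, ∀ y ∈ S, ∀ z ∈ S, x ≠ z →
      (wheelGraph n).Adj x y → (wheelGraph n).Adj y z → (wheelGraph n).Adj x z :=
  isGPSet_iff_of_dist_le_two (wheelGraph_connected n) wheelGraph_dist_le_two

theorem NoThreeConsecutive.eq_of_adj_of_adj {R : Set (ZMod n)} (hR : NoThreeConsecutive R)
    {a b c : ZMod n} (ha : a ∈ R) (hb : b ∈ R) (hc : c ∈ R)
    (hab : (wheelGraph n).Adj (some a) (some b)) (hbc : (wheelGraph n).Adj (some b) (some c)) :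
    a = c := by
  have h2 : ∀ i : ZMod n, i + 1 + 1 = i + 2 := fun i => by ring
  rcases (wheelGraph_adj_some_some.mp hab).2 with rfl | rfl <;>
    rcases (wheelGraph_adj_some_some.mp hbc).2 with rfl | h
  · exact (hR a ⟨ha, hb, h2 a ▸ hc⟩).elim
  · exact add_right_cancel h
  · rfl
  · subst h
    exact (hR c ⟨hc, hb, h2 c ▸ ha⟩).elim

theorem wheelGraph_not_adj_some_add_two (hn : 4 ≤ n) (i : ZMod n) :
    ¬ (wheelGraph n).Adj (some i) (some (i + 2)) := by
  have h1 : ((1 : ℕ) : ZMod n) ≠ 0 := ZMod.natCast_ne_zero_of_pos_of_lt (by omega) (by omega)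
  have h3 : ((3 : ℕ) : ZMod n) ≠ 0 := ZMod.natCast_ne_zero_of_pos_of_lt (by omega) (by omega)
  rw [wheelGraph_adj_some_some]
  rintro ⟨-, h | h⟩
  · exact h1 (by push_cast; linear_combination h)
  · exact h3 (by push_cast; linear_combination -h)

theorem IsGPSet.noThreeConsecutive_preimage_some (hn : 4 ≤ n) {S : Set (Option (ZMod n))}
    (hS : IsGPSet (wheelGraph n) S) : NoThreeConsecutive (some ⁻¹' S) := by
  rintro i ⟨h0, h1, h2⟩
  have hk : ∀ k : ℕ, 0 < k → k < n → ∀ j : ZMod n, some j ≠ some (j + k) := fun k hk hkn j h =>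
    ZMod.natCast_ne_zero_of_pos_of_lt hk hkn (by linear_combination -Option.some_injective _ h)
  have hadj : ∀ j : ZMod n, (wheelGraph n).Adj (some j) (some (j + 1)) := fun j =>
    wheelGraph_adj_some_some.mpr ⟨fun h => hk 1 one_pos (by omega) j (by simpa using h), Or.inl rfl⟩
  refine wheelGraph_not_adj_some_add_two hn i
    (isGPSet_wheelGraph_iff.mp hS _ h0 _ h1 _ h2 (by simpa using hk 2 two_pos (by omega) i)
      (hadj i) ?_)
  simpa [add_assoc, one_add_one_eq_two] using hadj (i + 1)

theorem IsGPSet.ncard_le_three_of_none_mem (hn : 4 ≤ n) {S : Set (Option (ZMod n))}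
    (hS : IsGPSet (wheelGraph n) S) (hnone : none ∈ S) : S.ncard ≤ 3 := by
  have : NeZero n := ⟨by omega⟩
  have hadj : ∀ a ∈ some ⁻¹' S, ∀ b ∈ some ⁻¹' S, a ≠ b →
      (wheelGraph n).Adj (some a) (some b) := fun a ha b hb hab =>
    isGPSet_wheelGraph_iff.mp hS _ ha _ hnone _ hb (by simpa using hab)
      (wheelGraph_adj_none_some a).symm (wheelGraph_adj_none_some b)
  have hrim : (some ⁻¹' S).ncard ≤ 2 := by
    by_contra! h
    obtain ⟨a, b, c, ha, hb, hc, hab, hac, hbc⟩ := (Set.two_lt_ncard_iff).mp h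
    exact hac ((hS.noThreeConsecutive_preimage_some hn).eq_of_adj_of_adj ha hb hc
      (hadj a ha b hb hab) (hadj b hb c hc hbc))
  have hsub : S ⊆ insert none (some '' (some ⁻¹' S)) := by
    rintro (_ | i) hi
    · exact Set.mem_insert _ _
    · exact Set.mem_insert_of_mem _ ⟨i, hi, rfl⟩
  calc S.ncard ≤ (insert none (some '' (some ⁻¹' S))).ncard := Set.ncard_le_ncard hsub
    _ ≤ (some '' (some ⁻¹' S)).ncard + 1 := Set.ncard_insert_le _ _
    _ ≤ 3 := by rw [Set.ncard_image_of_injective _ (Option.some_injective _)]; omega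

theorem IsGPSet.three_mul_ncard_le_of_none_notMem (hn : 4 ≤ n) {S : Set (Option (ZMod n))}
    (hS : IsGPSet (wheelGraph n) S) (hnone : none ∉ S) : 3 * S.ncard ≤ 2 * n := by
  have : NeZero n := ⟨by omega⟩
  have hrange : S ⊆ Set.range some := by
    rintro (_ | i) hi
    · exact (hnone hi).elim
    · exact ⟨i, rfl⟩
  rw [← Set.image_preimage_eq_of_subset hrange,
    Set.ncard_image_of_injective _ (Option.some_injective _)]
  exact (hS.noThreeConsecutive_preimage_some hn).three_mul_ncard_le

theorem IsGPSet.ncard_le_three_or_three_mul_ncard_le (hn : 4 ≤ n) {S : Set (Option (ZMod n))}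
    (hS : IsGPSet (wheelGraph n) S) : S.ncard ≤ 3 ∨ 3 * S.ncard ≤ 2 * n := by
  by_cases hnone : none ∈ S
  · exact Or.inl (hS.ncard_le_three_of_none_mem hn hnone)
  · exact Or.inr (hS.three_mul_ncard_le_of_none_notMem hn hnone)

theorem isGPSet_image_some_of_noThreeConsecutive {R : Set (ZMod n)} (hR : NoThreeConsecutive R) :
    IsGPSet (wheelGraph n) (some '' R) := by
  rw [isGPSet_wheelGraph_iff]
  rintro _ ⟨a, ha, rfl⟩ _ ⟨b, hb, rfl⟩ _ ⟨c, hc, rfl⟩ hac hab hbc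
  exact (hac (congrArg some (hR.eq_of_adj_of_adj ha hb hc hab hbc))).elim

theorem wheelGraph_isClique_triangle [Nontrivial (ZMod n)] :
    (wheelGraph n).IsClique {none, some 0, some 1} := by
  have h01 : (wheelGraph n).Adj (some 0) (some 1) :=
    wheelGraph_adj_some_some.mpr ⟨zero_ne_one, Or.inl (zero_add 1).symm⟩
  simp only [isClique_insert, Set.pairwise_singleton, Set.mem_insert_iff, Set.mem_singleton_iff]
  refine ⟨⟨trivial, fun b hb _ => hb ▸ h01⟩, ?_⟩
  rintro _ (rfl | rfl) - <;> exact wheelGraph_adj_none_some _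

theorem wheelGraph_three_eq_top : wheelGraph 3 = ⊤ := by
  ext u v
  rcases u with _ | i <;> rcases v with _ | j
  · simp
  · simpa using wheelGraph_adj_none_some j
  · simpa using (wheelGraph_adj_none_some i).symm
  · rw [wheelGraph_adj_some_some, top_adj, Ne, Ne, Option.some_inj]
    revert i j
    decide

end Wheel

/-- `gp(W₃) = 4`, `gp(W₄) = 3`, `gp(W₅) = 3`, and
`gp(W_n) = ⌊2n/3⌋` for `n ≥ 6`. -/
theorem gp_wheel :
    gpNumber (wheelGraph 3) = 4 ∧ gpNumber (wheelGraph 4) = 3 ∧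
    gpNumber (wheelGraph 5) = 3 ∧
    ∀ n : ℕ, 6 ≤ n → gpNumber (wheelGraph n) = 2 * n / 3 := by
  have htriangle : ∀ n, 4 ≤ n → IsGPSet (wheelGraph n) {none, some 0, some 1} ∧
      ({none, some 0, some 1} : Set (Option (ZMod n))).ncard = 3 := by
    intro n hn
    have : Fact (1 < n) := ⟨by omega⟩
    refine ⟨wheelGraph_isClique_triangle.isGPSet, ?_⟩
    rw [Set.ncard_insert_of_notMem (by simp), Set.ncard_pair (by simp)]
  refine ⟨?_, ?_, ?_, fun n hn => ?_⟩
  · have hcard : Nat.card (Option (ZMod 3)) = 4 := by simp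
    refine gpNumber_eq_of_isGPSet (isClique_univ.mpr wheelGraph_three_eq_top).isGPSet
      (by rw [Set.ncard_univ, hcard]) fun T _ => hcard ▸ T.ncard_le_card
  · obtain ⟨hS, hcard⟩ := htriangle 4 le_rfl
    exact gpNumber_eq_of_isGPSet hS hcard fun T hT => by
      have := hT.ncard_le_three_or_three_mul_ncard_le le_rfl; omega
  · obtain ⟨hS, hcard⟩ := htriangle 5 (by norm_num)
    exact gpNumber_eq_of_isGPSet hS hcard fun T hT => by
      have := hT.ncard_le_three_or_three_mul_ncard_le (by norm_num); omega
  · have : NeZero n := ⟨by omega⟩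
    refine gpNumber_eq_of_isGPSet (isGPSet_image_some_of_noThreeConsecutive
      (noThreeConsecutive_rimSkipThirds n)) ?_ fun T hT => ?_
    · rw [Set.ncard_image_of_injective _ (Option.some_injective _), ncard_rimSkipThirds]
    · have := hT.ncard_le_three_or_three_mul_ncard_le (by omega); omega
end

section
/- For n ≥ 6, no gp-set (maximum-cardinality general position set) of the wheel graph W_n contains the center vertex of W_n. -/
/-!
The centre `c` of `W_n` is adjacent to every rim vertex, so two non-adjacent rim vertices `x, z`
satisfy `d(x, z) = 2 = d(x, c) + d(c, z)`. Hence a general position set containing `c` is a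
clique, and as the rim cycle is triangle-free for `n ≥ 4`, it has at most three vertices. On the
other hand, for `n ≥ 6` the rim vertices `0, 1, 3, 4` are in general position: all distances in
`W_n` are at most 2, so a geodesic triple `x, y, z` would be a path `x ~ y ~ z`, and none of these
four vertices has two neighbours among them.
-/

open SimpleGraph

namespace IsGPSet

variable {V : Type*} {G : SimpleGraph V} {S : Set V}

theorem isClique_of_eccent_le_one (hS : IsGPSet G S) {c : V} (hc : c ∈ S)
    (hecc : G.eccent c ≤ 1) : G.IsClique S := by
  have hadj := (G.eccent_le_one_iff c).1 hecc
  intro x hx z hz hxz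
  obtain rfl | hxc := eq_or_ne x c
  · exact hadj z hxz
  obtain rfl | hzc := eq_or_ne z c
  · exact (hadj x hxz.symm).symm
  have hcx := hadj x hxc.symm
  have hcz := hadj z hzc.symm
  by_contra hnadj
  have hxz_dist : G.dist x z = 2 := by
    rw [SimpleGraph.dist, ENat.toNat_eq_iff (by norm_num), Nat.cast_ofNat, edist_eq_two_iff]
    exact ⟨hxz, hnadj, c, hcx.symm, hcz.symm⟩
  apply hS x hx c hc z hz hxc hzc.symm hxz
  rw [hxz_dist, dist_eq_one_iff_adj.2 hcx.symm, dist_eq_one_iff_adj.2 hcz]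

end IsGPSet

theorem isGPSet_of_ediam_le_two {V : Type*} {G : SimpleGraph V} {S : Set V}
    (hdiam : G.ediam ≤ 2) (hS : ∀ x ∈ S, ∀ y ∈ S, ∀ z ∈ S, G.Adj x y → G.Adj y z → x = z) :
    IsGPSet G S := by
  have hconn : G.Preconnected :=
    preconnected_of_ediam_ne_top (ne_top_of_le_ne_top (by simp) hdiam)
  intro x hx y hy z hz hxy hyz hxz h
  have hxz_le : G.dist x z ≤ 2 :=
    ENat.toNat_le_toNat (edist_le_ediam.trans hdiam) (by simp)
  have hxy_pos := (hconn x y).pos_dist_of_ne hxy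
  have hyz_pos := (hconn y z).pos_dist_of_ne hyz
  refine hxz (hS x hx y hy z hz (dist_eq_one_iff_adj.1 ?_) (dist_eq_one_iff_adj.1 ?_)) <;> omega

theorem le_gpNumber_s17 {V : Type*} [Finite V] {G : SimpleGraph V} {S : Set V} (hS : IsGPSet G S) :
    S.ncard ≤ gpNumber G := by
  refine le_csSup ⟨Nat.card V, ?_⟩ ⟨S, hS, rfl⟩
  rintro _ ⟨T, -, rfl⟩
  exact Set.ncard_le_card T

theorem ZMod.natCast_eq_natCast_iff_of_lt {n a b : ℕ} (ha : a < n) (hb : b < n) :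
    (a : ZMod n) = b ↔ a = b :=
  (CharP.natCast_injOn_Iio (ZMod n) n).eq_iff ha hb

namespace wheelGraph

variable {n : ℕ}

theorem some_adj_some_iff {i j : ZMod n} :
    (wheelGraph n).Adj (some i) (some j) ↔ i ≠ j ∧ (j = i + 1 ∨ i = j + 1) := by
  simp [wheelGraph, eq_comm]

theorem eccent_none_le_one : (wheelGraph n).eccent none ≤ 1 := by
  rw [eccent_le_one_iff]
  rintro (_ | i) h
  · exact absurd rfl h
  · simp [wheelGraph]

theorem ediam_le_two : (wheelGraph n).ediam ≤ 2 :=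
  calc (wheelGraph n).ediam ≤ 2 * (wheelGraph n).eccent none := ediam_le_two_mul_eccent none
    _ ≤ 2 * 1 := by gcongr; exact eccent_none_le_one
    _ = 2 := mul_one 2

theorem not_adj_some_some_of_adj_of_adj (h3 : (3 : ZMod n) ≠ 0) {i j k : ZMod n}
    (hij : (wheelGraph n).Adj (some i) (some j)) (hjk : (wheelGraph n).Adj (some j) (some k)) :
    ¬ (wheelGraph n).Adj (some i) (some k) := by
  rw [some_adj_some_iff] at hij hjk ⊢
  rintro ⟨hik, e3 | e3⟩ <;> rcases hij with ⟨hij, e1 | e1⟩ <;> rcases hjk with ⟨hjk, e2 | e2⟩ <;>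
    grind

theorem ncard_le_three_of_isClique [NeZero n] (h3 : (3 : ZMod n) ≠ 0)
    {S : Set (Option (ZMod n))} (hS : (wheelGraph n).IsClique S) : S.ncard ≤ 3 := by
  have hrim : (S \ {none}).ncard ≤ 2 := by
    by_contra! h
    obtain ⟨_ | i, _ | j, _ | k, ⟨hi, hi'⟩, ⟨hj, hj'⟩, ⟨hk, hk'⟩, hij, hik, hjk⟩ :=
      (Set.two_lt_ncard_iff).1 h <;> simp at hi' hj' hk'
    exact not_adj_some_some_of_adj_of_adj h3 (hS hi hj hij) (hS hj hk hjk) (hS hi hk hik)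
  have := Set.ncard_le_ncard_sdiff_add_ncard S {none}
  simp only [Set.ncard_singleton] at this
  omega

theorem natCast_adj_natCast_iff {a b : ℕ} (ha : a + 1 < n) (hb : b + 1 < n) :
    (wheelGraph n).Adj (some (a : ZMod n)) (some (b : ZMod n)) ↔ b = a + 1 ∨ a = b + 1 := by
  rw [some_adj_some_iff, ← Nat.cast_succ, ← Nat.cast_succ, ne_eq,
    ZMod.natCast_eq_natCast_iff_of_lt (by omega) (by omega),
    ZMod.natCast_eq_natCast_iff_of_lt (by omega) (by omega),
    ZMod.natCast_eq_natCast_iff_of_lt (by omega) (by omega)]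
  omega

theorem four_le_gpNumber (hn : 6 ≤ n) : 4 ≤ gpNumber (wheelGraph n) := by
  have : NeZero n := ⟨by omega⟩
  set T : Set ℕ := {0, 1, 3, 4}
  have hT : ∀ a ∈ T, a + 1 < n := by
    simp only [T, Set.mem_insert_iff, Set.mem_singleton_iff]; omega
  have hgp : IsGPSet (wheelGraph n) ((fun a : ℕ => some (a : ZMod n)) '' T) := by
    refine isGPSet_of_ediam_le_two ediam_le_two ?_
    rintro _ ⟨a, ha, rfl⟩ _ ⟨b, hb, rfl⟩ _ ⟨c, hc, rfl⟩ hab hbc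
    rw [natCast_adj_natCast_iff (hT a ha) (hT b hb)] at hab
    rw [natCast_adj_natCast_iff (hT b hb) (hT c hc)] at hbc
    simp only [T, Set.mem_insert_iff, Set.mem_singleton_iff] at ha hb hc
    obtain rfl : a = c := by omega
    rfl
  have hinj : T.InjOn (fun a : ℕ => some (a : ZMod n)) := fun a ha b hb hab =>
    (ZMod.natCast_eq_natCast_iff_of_lt (by linarith [hT a ha]) (by linarith [hT b hb])).1
      (Option.some_injective _ hab)
  calc 4 = T.ncard := by rw [Set.ncard_eq_toFinset_card']; rfl
    _ = _ := hinj.ncard_image.symm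
    _ ≤ _ := le_gpNumber_s17 hgp

end wheelGraph

/-- For `n ≥ 6` no gp-set of the wheel `W_n` contains the centre. -/
theorem center_not_mem_gpSet_wheel (n : ℕ) (hn : 6 ≤ n)
    (S : Set (Option (ZMod n))) (hS : IsGPMaxSet (wheelGraph n) S) :
    none ∉ S := by
  have : NeZero n := ⟨by omega⟩
  have h3 : (3 : ZMod n) ≠ 0 := by
    exact_mod_cast (ZMod.natCast_eq_natCast_iff_of_lt (a := 3) (b := 0) (by omega) (by omega)).not.2
      (by norm_num)
  intro hnone
  have hle : S.ncard ≤ 3 := wheelGraph.ncard_le_three_of_isClique h3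
    (hS.1.isClique_of_eccent_le_one hnone wheelGraph.eccent_none_le_one)
  have hge : 4 ≤ S.ncard := hS.2 ▸ wheelGraph.four_le_gpNumber hn
  omega
end

section
/- For the cycle graph C_n: gp(C₃) = 3, gp(C₄) = 2, and gp(C_n) = 3 for every n ≥ 5. -/
open SimpleGraph

/-- The cycle graph `C_n` on the vertex set `ZMod n`. -/
def cycleGraphZ (n : ℕ) : SimpleGraph (ZMod n) :=
  SimpleGraph.fromRel (fun a b => b = a + 1)

/-!
On `ZMod n` the distance of `C_n` is `|valMinAbs (b - a)|`, the length of the shorter arc, so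
three points lie on a common geodesic exactly when they lie on an arc of length at most `n / 2`.
Given four points in cyclic order `p₀ < p₁ < p₂ < p₃`, the arcs from `p₀` to `p₂` and from `p₂`
back to `p₀` cover the cycle, so one of them has length at most `n / 2` and carries three of the
points; in `C_4` any three points already leave a gap of length `2`. Conversely, three points
cutting the cycle into arcs each shorter than `n / 2` are in general position, and such points
exist for every `n ≥ 3` except `n = 4`.
-/

theorem ZMod.natAbs_valMinAbs_le_of_intCast_eq {n : ℕ} {x : ZMod n} {m : ℤ}
    (h : (m : ZMod n) = x) : x.valMinAbs.natAbs ≤ m.natAbs := by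
  rcases n with _ | n
  · subst h; rfl
  · exact ZMod.natAbs_min_of_le_div_two _ _ _ (by rw [ZMod.coe_valMinAbs, h])
      (ZMod.natAbs_valMinAbs_le x)

section CycleDist

variable {n : ℕ}

theorem cycleGraphZ_adj {a b : ZMod n} :
    (cycleGraphZ n).Adj a b ↔ a ≠ b ∧ (b = a + 1 ∨ a = b + 1) :=
  SimpleGraph.fromRel_adj _ _ _

theorem cycleGraphZ_exists_walk (a : ZMod n) (m : ℤ) :
    ∃ p : (cycleGraphZ n).Walk a (a + m), p.length ≤ m.natAbs := by
  have step : ∀ (x y : ZMod n) (p : (cycleGraphZ n).Walk a x),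
      (y = x + 1 ∨ x = y + 1) → ∃ q : (cycleGraphZ n).Walk a y, q.length ≤ p.length + 1 := by
    intro x y p hxy
    by_cases hne : x = y
    · exact ⟨p.copy rfl hne, by simp⟩
    · exact ⟨p.concat (cycleGraphZ_adj.mpr ⟨hne, hxy⟩), by simp⟩
  induction m using Int.induction_on with
  | zero => exact ⟨SimpleGraph.Walk.nil.copy rfl (by simp), by simp⟩
  | succ i ih =>
    obtain ⟨p, hp⟩ := ih
    obtain ⟨q, hq⟩ := step _ (a + ((i + 1 : ℤ) : ZMod n)) p (Or.inl (by push_cast; ring))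
    exact ⟨q, by omega⟩
  | pred i ih =>
    obtain ⟨p, hp⟩ := ih
    obtain ⟨q, hq⟩ := step _ (a + ((-i - 1 : ℤ) : ZMod n)) p (Or.inr (by push_cast; ring))
    exact ⟨q, by omega⟩

theorem cycleGraphZ_exists_intCast_of_walk {a b : ZMod n} (p : (cycleGraphZ n).Walk a b) :
    ∃ m : ℤ, m.natAbs ≤ p.length ∧ a + m = b := by
  induction p with
  | nil => exact ⟨0, by simp⟩
  | @cons u v w h q ih =>
    obtain ⟨m, hm, rfl⟩ := ih
    rcases (cycleGraphZ_adj.mp h).2 with rfl | rfl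
    · exact ⟨m + 1, by simp; omega, by push_cast; ring⟩
    · exact ⟨m - 1, by simp; omega, by push_cast; ring⟩

theorem cycleGraphZ_dist (a b : ZMod n) :
    (cycleGraphZ n).dist a b = (b - a).valMinAbs.natAbs := by
  have hb : a + ((b - a).valMinAbs : ZMod n) = b := by rw [ZMod.coe_valMinAbs]; ring
  obtain ⟨p, hp⟩ := cycleGraphZ_exists_walk a (b - a).valMinAbs
  apply le_antisymm
  · exact (SimpleGraph.dist_le (p.copy rfl hb)).trans (by simpa using hp)
  · obtain ⟨q, hq⟩ := (p.copy rfl hb).reachable.exists_walk_length_eq_dist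
    obtain ⟨m, hm, hab⟩ := cycleGraphZ_exists_intCast_of_walk q
    exact hq ▸ (ZMod.natAbs_valMinAbs_le_of_intCast_eq (by rw [← hab]; ring)).trans hm

end CycleDist

section GeneralPosition

variable {V : Type*} {G : SimpleGraph V}

theorem isGPSet_pair (x y : V) : IsGPSet G {x, y} := by
  intro a ha b hb c hc hab hbc hac
  simp only [Set.mem_insert_iff, Set.mem_singleton_iff] at ha hb hc
  rcases ha with rfl | rfl <;> rcases hb with rfl | rfl <;> rcases hc with rfl | rfl <;>
    contradiction

theorem isGPSet_triple {x y z : V} (hxz : G.dist x z < G.dist x y + G.dist y z)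
    (hxy : G.dist x y < G.dist y z + G.dist x z) (hyz : G.dist y z < G.dist x y + G.dist x z) :
    IsGPSet G {x, y, z} := by
  have := G.dist_comm (u := x) (v := y)
  have := G.dist_comm (u := y) (v := z)
  have := G.dist_comm (u := x) (v := z)
  intro a ha b hb c hc hab hbc hac
  simp only [Set.mem_insert_iff, Set.mem_singleton_iff] at ha hb hc
  rcases ha with rfl | rfl | rfl <;> rcases hb with rfl | rfl | rfl <;>
    rcases hc with rfl | rfl | rfl <;> first | contradiction | omega

theorem gpNumber_eq_of_forall_ncard_le {k : ℕ} (hle : ∀ S, IsGPSet G S → S.ncard ≤ k)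
    {S : Set V} (hS : IsGPSet G S) (hk : S.ncard = k) : gpNumber G = k := by
  have hbdd : BddAbove {m | ∃ S : Set V, IsGPSet G S ∧ S.ncard = m} :=
    ⟨k, fun _ ⟨T, hT, hm⟩ => hm ▸ hle T hT⟩
  exact le_antisymm (csSup_le ⟨k, S, hS, hk⟩ fun _ ⟨T, hT, hm⟩ => hm ▸ hle T hT)
    (le_csSup hbdd ⟨S, hS, hk⟩)

end GeneralPosition

section CycleGP

variable {n : ℕ}

theorem ZMod.natCast_ne_natCast_of_lt {a b : ℕ} (hab : a < b) (hba : b - a < n) :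
    (a : ZMod n) ≠ b := fun h =>
  (Nat.le_of_dvd (by omega)
    ((Nat.modEq_iff_dvd' hab.le).mp ((ZMod.natCast_eq_natCast_iff _ _ _).mp h))).not_gt hba

theorem ZMod.exists_strictMono_natCast_mem [NeZero n] {S : Set (ZMod n)} {k : ℕ}
    (hk : k ≤ S.ncard) :
    ∃ p : Fin k → ℕ, StrictMono p ∧ (∀ i, p i < n) ∧ ∀ i, (p i : ZMod n) ∈ S := by
  rw [← Set.ncard_image_of_injective S (ZMod.val_injective n)] at hk
  obtain ⟨U, hUS, hU⟩ := Set.exists_subset_card_eq hk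
  have hfin : U.Finite := (Set.finite_Iio n).subset fun _ hu => by
    obtain ⟨s, -, rfl⟩ := hUS hu
    exact ZMod.val_lt s
  have hcard : hfin.toFinset.card = k := by rw [← hU, Set.ncard_eq_toFinset_card U hfin]
  have hmem : ∀ i, ∃ s ∈ S, s.val = hfin.toFinset.orderEmbOfFin hcard i := fun i =>
    hUS (hfin.mem_toFinset.mp (hfin.toFinset.orderEmbOfFin_mem hcard i))
  refine ⟨hfin.toFinset.orderEmbOfFin hcard, (hfin.toFinset.orderEmbOfFin hcard).strictMono,
    fun i => ?_, fun i => ?_⟩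
  · obtain ⟨s, -, hs⟩ := hmem i
    exact hs ▸ ZMod.val_lt s
  · obtain ⟨s, hS, hs⟩ := hmem i
    rwa [← hs, ZMod.natCast_zmod_val]

theorem cycleGraphZ_dist_natCast_of_le {a b c : ℕ} (hab : a ≤ b) (hbc : b ≤ c)
    (harc : 2 * (c - a) ≤ n) :
    (cycleGraphZ n).dist (a : ZMod n) c =
      (cycleGraphZ n).dist (a : ZMod n) b + (cycleGraphZ n).dist (b : ZMod n) c := by
  have hdist : ∀ {x y : ℕ}, x ≤ y → 2 * (y - x) ≤ n →
      (cycleGraphZ n).dist (x : ZMod n) y = y - x := fun hxy h => by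
    rw [cycleGraphZ_dist, ← Nat.cast_sub hxy, ZMod.valMinAbs_natCast_of_le_half (by omega),
      Int.natAbs_natCast]
  rw [hdist hab (by omega), hdist hbc (by omega), hdist (hab.trans hbc) harc]
  omega

theorem not_isGPSet_cycleGraphZ_of_arc {S : Set (ZMod n)} {a b c : ℕ} (hab : a < b)
    (hbc : b < c) (harc : 2 * (c - a) ≤ n) (ha : (a : ZMod n) ∈ S) (hb : (b : ZMod n) ∈ S)
    (hc : (c : ZMod n) ∈ S) : ¬ IsGPSet (cycleGraphZ n) S := fun hS =>
  hS _ ha _ hb _ hc (ZMod.natCast_ne_natCast_of_lt hab (by omega))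
    (ZMod.natCast_ne_natCast_of_lt hbc (by omega))
    (ZMod.natCast_ne_natCast_of_lt (hab.trans hbc) (by omega))
    (cycleGraphZ_dist_natCast_of_le hab.le hbc.le harc)

theorem not_isGPSet_cycleGraphZ_of_three {S : Set (ZMod n)} {p₀ p₁ p₂ : ℕ} (h₀₁ : p₀ < p₁)
    (h₁₂ : p₁ < p₂) (hp₂ : p₂ < n) (h₀ : (p₀ : ZMod n) ∈ S) (h₁ : (p₁ : ZMod n) ∈ S)
    (h₂ : (p₂ : ZMod n) ∈ S)
    (hgap : n ≤ 2 * (p₁ - p₀) ∨ n ≤ 2 * (p₂ - p₁) ∨ 2 * (p₂ - p₀) ≤ n) :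
    ¬ IsGPSet (cycleGraphZ n) S := by
  have hshift : ∀ p : ℕ, ((p + n : ℕ) : ZMod n) = p := by simp
  rcases hgap with hgap | hgap | hgap
  · exact not_isGPSet_cycleGraphZ_of_arc (c := p₀ + n) h₁₂ (by omega) (by omega) h₁ h₂
      (by rwa [hshift])
  · exact not_isGPSet_cycleGraphZ_of_arc (b := p₀ + n) (c := p₁ + n) (by omega) (by omega)
      (by omega) h₂ (by rwa [hshift]) (by rwa [hshift])
  · exact not_isGPSet_cycleGraphZ_of_arc h₀₁ h₁₂ hgap h₀ h₁ h₂

theorem IsGPSet.ncard_le_three_of_cycleGraphZ [NeZero n] {S : Set (ZMod n)}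
    (hS : IsGPSet (cycleGraphZ n) S) : S.ncard ≤ 3 := by
  by_contra! h
  obtain ⟨p, hp, hlt, hmem⟩ := ZMod.exists_strictMono_natCast_mem (k := 4) h
  have h01 := @hp 0 1 (by decide)
  have h12 := @hp 1 2 (by decide)
  have h23 := @hp 2 3 (by decide)
  -- The arcs `p 0 → p 2` and `p 2 → p 0 + n` cover the cycle, so one has length at most `n / 2`.
  by_cases harc : 2 * (p 2 - p 0) ≤ n
  · exact not_isGPSet_cycleGraphZ_of_three h01 h12 (hlt 2) (hmem 0) (hmem 1) (hmem 2)
      (Or.inr (Or.inr harc)) hS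
  · exact not_isGPSet_cycleGraphZ_of_three (h01.trans h12) h23 (hlt 3) (hmem 0) (hmem 2)
      (hmem 3) (Or.inl (by omega)) hS

theorem IsGPSet.ncard_le_two_of_cycleGraphZ_four {S : Set (ZMod 4)}
    (hS : IsGPSet (cycleGraphZ 4) S) : S.ncard ≤ 2 := by
  by_contra! h
  obtain ⟨p, hp, hlt, hmem⟩ := ZMod.exists_strictMono_natCast_mem (k := 3) h
  have h01 := @hp 0 1 (by decide)
  have h12 := @hp 1 2 (by decide)
  exact not_isGPSet_cycleGraphZ_of_three h01 h12 (hlt 2) (hmem 0) (hmem 1) (hmem 2)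
    (by omega) hS

theorem exists_isGPSet_cycleGraphZ_ncard_eq_three (h3 : 3 ≤ n) (h4 : n ≠ 4) :
    ∃ S : Set (ZMod n), IsGPSet (cycleGraphZ n) S ∧ S.ncard = 3 := by
  -- The gaps `k, k, n - 2 * k` between `0, k, 2 * k` are all shorter than `n / 2`.
  set k := (n + 1) / 3
  have hk : ((k : ℕ) : ZMod n).valMinAbs = k := ZMod.valMinAbs_natCast_of_le_half (by omega)
  have h2k : ((2 * k : ℕ) : ZMod n).valMinAbs = 2 * k - n :=
    ZMod.valMinAbs_natCast_of_half_lt (by omega) (by omega)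
  have d01 : (cycleGraphZ n).dist 0 (k : ZMod n) = k := by simp [cycleGraphZ_dist, hk]
  have d12 : (cycleGraphZ n).dist (k : ZMod n) ((2 * k : ℕ) : ZMod n) = k := by
    rw [cycleGraphZ_dist, show ((2 * k : ℕ) : ZMod n) - k = k by push_cast; ring, hk]
    simp
  have d02 : (cycleGraphZ n).dist 0 ((2 * k : ℕ) : ZMod n) = n - 2 * k := by
    rw [cycleGraphZ_dist, sub_zero, h2k]
    omega
  refine ⟨{0, (k : ZMod n), ((2 * k : ℕ) : ZMod n)},
    isGPSet_triple (by omega) (by omega) (by omega), Set.ncard_eq_three.mpr ?_⟩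
  have hne : ∀ {a b : ℕ}, a < b → b ≤ 2 * k → (a : ZMod n) ≠ b := fun hab hb =>
    ZMod.natCast_ne_natCast_of_lt hab (by omega)
  exact ⟨_, _, _, by simpa using hne (a := 0) (by omega) (by omega),
    by simpa using hne (a := 0) (b := 2 * k) (by omega) le_rfl, hne (by omega) le_rfl, rfl⟩

theorem gpNumber_cycleGraphZ_eq_three (h3 : 3 ≤ n) (h4 : n ≠ 4) :
    gpNumber (cycleGraphZ n) = 3 := by
  have : NeZero n := ⟨by omega⟩
  obtain ⟨S, hS, hcard⟩ := exists_isGPSet_cycleGraphZ_ncard_eq_three h3 h4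
  exact gpNumber_eq_of_forall_ncard_le (fun _ hT => hT.ncard_le_three_of_cycleGraphZ) hS hcard

theorem gpNumber_cycleGraphZ_four : gpNumber (cycleGraphZ 4) = 2 :=
  gpNumber_eq_of_forall_ncard_le (fun _ hT => hT.ncard_le_two_of_cycleGraphZ_four)
    (isGPSet_pair 0 1) (Set.ncard_pair (by decide))

end CycleGP

/-- `gp(C₃) = 3`, `gp(C₄) = 2`, and `gp(C_n) = 3` for `n ≥ 5`. -/
theorem gp_cycle :
    gpNumber (cycleGraphZ 3) = 3 ∧ gpNumber (cycleGraphZ 4) = 2 ∧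
    ∀ n : ℕ, 5 ≤ n → gpNumber (cycleGraphZ n) = 3 :=
  ⟨gpNumber_cycleGraphZ_eq_three le_rfl (by decide), gpNumber_cycleGraphZ_four,
    fun _ hn => gpNumber_cycleGraphZ_eq_three (by omega) (by omega)⟩
end
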